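/- arXiv:2405.10387 — 2 statements merged into one kernel-verified Lean document; each statement's English description precedes it below -/
import Mathlib

section
/- Let R be a commutative ring and f₁, …, fₙ ∈ R elements generating the unit ideal. For each i let Rᵢ be an R-algebra which is a localisation of R away from fᵢ, and for each pair (i, j) let Rᵢⱼ be an R-algebra which is a localisation of R away from fᵢ·fⱼ, equipped with the induced R-algebra maps Rᵢ → Rᵢⱼ and Rⱼ → Rᵢⱼ. Then the sequence 0 → R → ∏ᵢ Rᵢ → ∏_{i,j} R_{i,j} is exact, where the first nontrivial map is the product of the structure maps R → Rᵢ and the second sends a family (r_k)_k to the family whose (i,j) component is the image of rᵢ minus the image of rⱼ in R_{i,j}. Concretely: (a) the map R → ∏ᵢ Rᵢ is injective; (b) a family (rᵢ)ᵢ ∈ ∏ᵢ Rᵢ lies in the image of R if and only if for all i, j the images of rᵢ and rⱼ in R_{i,j} coincide. -/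
/-- Any `R`-algebra hom between two localisations of `R` away from the same element is
injective (it must agree with the canonical algebra equivalence). -/
lemma algHom_injective_of_away {R : Type*} [CommRing R] (a : R) {A B : Type*}
    [CommRing A] [CommRing B] [Algebra R A] [Algebra R B]
    [IsLocalization.Away a A] [IsLocalization.Away a B] (g : A →ₐ[R] B) :
    Function.Injective g := by
  have key : (g : A →+* B) =
      ((IsLocalization.algEquiv (Submonoid.powers a) A B : A ≃ₐ[R] B) : A →+* B) := by
    apply IsLocalization.ringHom_ext (Submonoid.powers a)
    ext x
    simp
  intro x y hxy
  apply (IsLocalization.algEquiv (Submonoid.powers a) A B).injective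
  have hx := RingHom.congr_fun key x
  have hy := RingHom.congr_fun key y
  simp only [RingHom.coe_coe] at hx hy
  rw [← hx, ← hy]
  exact hxy

/-- If `f 1, …, f n` generate the unit ideal of `R`, `Rᵢ` is a localisation of `R` away
from `f i`, `Rᵢⱼ` is a localisation of `R` away from `f i * f j`, and
`φ i j : Rᵢ → Rᵢⱼ`, `ψ i j : Rⱼ → Rᵢⱼ` are the induced `R`-algebra maps, then
`0 → R → ∏ᵢ Rᵢ → ∏_{i,j} Rᵢⱼ` is exact: (a) `R → ∏ᵢ Rᵢ` is injective, and
(b) a family `(rᵢ)` comes from `R` iff `rᵢ` and `rⱼ` have equal images in `Rᵢⱼ` for all `i, j`. -/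
theorem localization_cover_exact {R : Type*} [CommRing R] {n : ℕ} (f : Fin n → R)
    (hf : Ideal.span (Set.range f) = ⊤)
    (Ri : Fin n → Type*) [∀ i, CommRing (Ri i)] [∀ i, Algebra R (Ri i)]
    [∀ i, IsLocalization.Away (f i) (Ri i)]
    (Rij : Fin n → Fin n → Type*) [∀ i j, CommRing (Rij i j)] [∀ i j, Algebra R (Rij i j)]
    [∀ i j, IsLocalization.Away (f i * f j) (Rij i j)]
    (φ : ∀ i j, Ri i →ₐ[R] Rij i j) (ψ : ∀ i j, Ri j →ₐ[R] Rij i j) :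
    Function.Injective (fun r : R => fun i => algebraMap R (Ri i) r) ∧
    ∀ r : ∀ i, Ri i,
      (∀ i j, φ i j (r i) = ψ i j (r j)) ↔ ∃ t : R, ∀ i, algebraMap R (Ri i) t = r i := by
  classical
  constructor
  · -- injectivity
    intro x y hxy
    apply Localization.algebraMap_injective_of_span_eq_top (Set.range f) hf
    funext a
    obtain ⟨i, hi⟩ := a.2
    have h1 : algebraMap R (Ri i) x = algebraMap R (Ri i) y := congrFun hxy i
    rw [IsLocalization.eq_iff_exists (Submonoid.powers (f i))] at h1
    show algebraMap R (Localization.Away a.1) x = algebraMap R (Localization.Away a.1) y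
    rw [IsLocalization.eq_iff_exists (Submonoid.powers a.1)]
    rw [← hi]
    exact h1
  · intro r
    constructor
    · intro h
      -- transfer lemma
      have L' : ∀ i j, f i = f j → ∀ t : R,
          algebraMap R (Ri i) t = r i → algebraMap R (Ri j) t = r j := by
        intro i j hij t ht
        haveI : IsLocalization.Away (f j) (Rij i j) := by
          refine IsLocalization.isLocalization_of_is_exists_mul_mem
            (S := Rij i j) (Submonoid.powers (f i * f j)) (Submonoid.powers (f j)) ?_ ?_
          · rw [Submonoid.powers_le]
            exact ⟨2, by rw [hij]; ring⟩
          · rintro ⟨x, m, rfl⟩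
            exact ⟨f i ^ m, m, mul_pow _ _ m⟩
        apply algHom_injective_of_away (f j) (ψ i j)
        rw [(ψ i j).commutes, ← h i j, ← ht, (φ i j).commutes]
      -- choose representatives
      have idx : ∀ a : Set.range f, ∃ i, f i = a.1 := fun a => a.2
      choose idx hidx using idx
      haveI inst : ∀ a : Set.range f, IsLocalization.Away a.1 (Ri (idx a)) := by
        intro a
        rw [← hidx a]
        infer_instance
      set F : ∀ a : Set.range f, Localization.Away a.1 := fun a =>
        IsLocalization.algEquiv (Submonoid.powers a.1) (Ri (idx a))
          (Localization.Away a.1) (r (idx a)) with hF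
      have hcompat : ∀ a b : Set.range f,
          IsLocalization.Away.awayToAwayRight (P := Localization.Away (a.1 * b.1 : R))
            a.1 b.1 (F a)
          = IsLocalization.Away.awayToAwayLeft b.1 a.1 (F b) := by
        intro a b
        set i := idx a
        set j := idx b
        haveI instij : IsLocalization.Away (a.1 * b.1 : R) (Rij i j) := by
          rw [← hidx a, ← hidx b]
          infer_instance
        set G : Rij i j ≃ₐ[R] Localization.Away (a.1 * b.1 : R) :=
          IsLocalization.algEquiv (Submonoid.powers (a.1 * b.1 : R)) _ _ with hG
        have e1 : (IsLocalization.Away.awayToAwayRight (S := Localization.Away a.1)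
            (P := Localization.Away (a.1 * b.1 : R)) a.1 b.1).comp
              ((IsLocalization.algEquiv (Submonoid.powers a.1) (Ri i)
                (Localization.Away a.1) : Ri i ≃+* Localization.Away a.1) : Ri i →+* _)
            = (G : Rij i j →+* Localization.Away (a.1 * b.1 : R)).comp
              ((φ i j : Ri i →+* Rij i j)) := by
          haveI : IsLocalization.Away (a.1 : R) (Ri i) := inst a
          apply IsLocalization.ringHom_ext (Submonoid.powers (a.1 : R))
          ext x
          simp [IsLocalization.Away.awayToAwayRight_eq]
        have e2 : (IsLocalization.Away.awayToAwayLeft (S := Localization.Away b.1)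
            (P := Localization.Away (a.1 * b.1 : R)) b.1 a.1).comp
              ((IsLocalization.algEquiv (Submonoid.powers b.1) (Ri j)
                (Localization.Away b.1) : Ri j ≃+* Localization.Away b.1) : Ri j →+* _)
            = (G : Rij i j →+* Localization.Away (a.1 * b.1 : R)).comp
              ((ψ i j : Ri j →+* Rij i j)) := by
          haveI : IsLocalization.Away (b.1 : R) (Ri j) := inst b
          apply IsLocalization.ringHom_ext (Submonoid.powers (b.1 : R))
          ext x
          simp [IsLocalization.Away.awayToAwayLeft_eq]
        have c1 := RingHom.congr_fun e1 (r i)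
        have c2 := RingHom.congr_fun e2 (r j)
        simp only [RingHom.coe_comp, Function.comp_apply, RingHom.coe_coe] at c1 c2
        show IsLocalization.Away.awayToAwayRight a.1 b.1
            ((IsLocalization.algEquiv (Submonoid.powers a.1) (Ri i)
              (Localization.Away a.1)) (r i))
          = IsLocalization.Away.awayToAwayLeft b.1 a.1
            ((IsLocalization.algEquiv (Submonoid.powers b.1) (Ri j)
              (Localization.Away b.1)) (r j))
        exact c1.trans ((congrArg G (h i j)).trans c2.symm)
      obtain ⟨t, ht, -⟩ :=
        Localization.existsUnique_algebraMap_eq_of_span_eq_top (Set.range f) hf F hcompat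
      refine ⟨t, fun i => ?_⟩
      set a : Set.range f := ⟨f i, ⟨i, rfl⟩⟩ with ha
      have h1 := ht a
      rw [hF] at h1
      have h2 : algebraMap R (Ri (idx a)) t = r (idx a) := by
        apply (IsLocalization.algEquiv (Submonoid.powers a.1) (Ri (idx a))
          (Localization.Away a.1)).injective
        exact ((IsLocalization.algEquiv (Submonoid.powers a.1) (Ri (idx a))
          (Localization.Away a.1)).commutes t).trans h1
      exact L' (idx a) i (hidx a) t h2
    · rintro ⟨t, ht⟩ i j
      rw [← ht i, ← ht j, (φ i j).commutes, (ψ i j).commutes]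
end

section
/- Let R be a commutative ring, f, g ∈ R two elements contained in exactly the same prime ideals of R, and M an R-module. Let φ : M → M_f exhibit M_f as a localisation of M at the powers of f, and ψ : M → M_g exhibit M_g as a localisation of M at the powers of g. Then there exists a unique R-linear map α : M_f → M_g with α ∘ φ = ψ, and α is an isomorphism of R-modules. -/
lemma mem_radical_of_same_primes {R : Type*} [CommRing R] (f g : R)
    (h : ∀ p : Ideal R, p.IsPrime → (f ∈ p → g ∈ p)) :
    g ∈ (Ideal.span {f}).radical := by
  rw [Ideal.radical_eq_sInf]
  refine Ideal.mem_sInf.mpr fun {J} hJ => ?_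
  exact h J hJ.2 (hJ.1 (Ideal.subset_span rfl))

/-- If `f` and `g` lie in exactly the same prime ideals of `R`, and `φ : M →ₗ[R] Mf`,
`ψ : M →ₗ[R] Mg` exhibit `Mf`, `Mg` as localisations of the `R`-module `M` at the powers
of `f` and of `g` respectively, then there is a unique `R`-linear map `α : Mf →ₗ[R] Mg`
with `α ∘ φ = ψ`, and `α` is an isomorphism of `R`-modules. -/
theorem unique_linearMap_between_localized_modules
    {R M Mf Mg : Type*} [CommRing R]
    [AddCommGroup M] [AddCommGroup Mf] [AddCommGroup Mg]
    [Module R M] [Module R Mf] [Module R Mg]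
    (f g : R) (h : ∀ p : Ideal R, p.IsPrime → (f ∈ p ↔ g ∈ p))
    (φ : M →ₗ[R] Mf) (ψ : M →ₗ[R] Mg)
    [IsLocalizedModule (Submonoid.powers f) φ] [IsLocalizedModule (Submonoid.powers g) ψ] :
    ∃ α : Mf →ₗ[R] Mg, α ∘ₗ φ = ψ ∧ (∀ β : Mf →ₗ[R] Mg, β ∘ₗ φ = ψ → β = α) ∧
      Function.Bijective α := by
  -- g^n = f * c and f^m = g * d for some n, m, c, d
  obtain ⟨n, hn⟩ := mem_radical_of_same_primes f g (fun p hp => (h p hp).mp)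
  obtain ⟨m, hm⟩ := mem_radical_of_same_primes g f (fun p hp => (h p hp).mpr)
  obtain ⟨c, hc⟩ := Ideal.mem_span_singleton'.mp hn
  obtain ⟨d, hd⟩ := Ideal.mem_span_singleton'.mp hm
  set T : Submonoid R := Submonoid.powers f ⊔ Submonoid.powers g with hT
  have keyf : ∀ x : T, ∃ r : R, r * x ∈ Submonoid.powers f := by
    rintro ⟨x, hx⟩
    obtain ⟨y, ⟨i, rfl⟩, z, ⟨j, rfl⟩, rfl⟩ := Submonoid.mem_sup.mp hx
    refine ⟨d ^ j, ⟨i + m * j, ?_⟩⟩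
    have key : d ^ j * g ^ j = f ^ (m * j) := by rw [← mul_pow, hd, ← pow_mul]
    show f ^ (i + m * j) = d ^ j * (f ^ i * g ^ j)
    symm
    calc d ^ j * ((f ^ i : R) * (g ^ j : R)) = f ^ i * (d ^ j * g ^ j) := by ring
      _ = f ^ i * f ^ (m * j) := by rw [key]
      _ = f ^ (i + m * j) := by rw [← pow_add]
  have keyg : ∀ x : T, ∃ r : R, r * x ∈ Submonoid.powers g := by
    rintro ⟨x, hx⟩
    obtain ⟨y, ⟨i, rfl⟩, z, ⟨j, rfl⟩, rfl⟩ := Submonoid.mem_sup.mp hx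
    refine ⟨c ^ i, ⟨j + n * i, ?_⟩⟩
    have key : c ^ i * f ^ i = g ^ (n * i) := by rw [← mul_pow, hc, ← pow_mul]
    show g ^ (j + n * i) = c ^ i * (f ^ i * g ^ j)
    symm
    calc c ^ i * ((f ^ i : R) * (g ^ j : R)) = g ^ j * (c ^ i * f ^ i) := by ring
      _ = g ^ j * g ^ (n * i) := by rw [key]
      _ = g ^ (j + n * i) := by rw [← pow_add]
  haveI hTφ : IsLocalizedModule T φ :=
    IsLocalizedModule.of_exists_mul_mem (Submonoid.powers f) T le_sup_left keyf φ
  haveI hTψ : IsLocalizedModule T ψ :=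
    IsLocalizedModule.of_exists_mul_mem (Submonoid.powers g) T le_sup_right keyg ψ
  obtain ⟨α, hα, hαu⟩ := IsLocalizedModule.is_universal T φ ψ
    (fun x => IsLocalizedModule.map_units ψ x)
  obtain ⟨β, hβ, hβu⟩ := IsLocalizedModule.is_universal T ψ φ
    (fun x => IsLocalizedModule.map_units φ x)
  refine ⟨α, hα, fun γ hγ => ?_, ?_⟩
  · exact (hαu γ hγ).symm.trans rfl ▸ hαu γ hγ
  · have hβα : β ∘ₗ α = LinearMap.id := by
      obtain ⟨l, hl, hlu⟩ := IsLocalizedModule.is_universal T φ φ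
        (fun x => IsLocalizedModule.map_units φ x)
      have h1 : (β ∘ₗ α).comp φ = φ := by
        rw [LinearMap.comp_assoc, hα, hβ]
      have h2 : (LinearMap.id : Mf →ₗ[R] Mf).comp φ = φ := LinearMap.id_comp φ
      rw [hlu _ h1, hlu _ h2]
    have hαβ : α ∘ₗ β = LinearMap.id := by
      obtain ⟨l, hl, hlu⟩ := IsLocalizedModule.is_universal T ψ ψ
        (fun x => IsLocalizedModule.map_units ψ x)
      have h1 : (α ∘ₗ β).comp ψ = ψ := by
        rw [LinearMap.comp_assoc, hβ, hα]
      have h2 : (LinearMap.id : Mg →ₗ[R] Mg).comp ψ = ψ := LinearMap.id_comp ψ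
      rw [hlu _ h1, hlu _ h2]
    have hl : Function.LeftInverse β α := fun x => LinearMap.congr_fun hβα x
    have hr : Function.RightInverse β α := fun x => LinearMap.congr_fun hαβ x
    exact ⟨hl.injective, hr.surjective⟩
end
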